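/- Let a = (a_k)_{k ∈ ℕ} ∈ {0,1}^ℕ and set P(a)_0 := 0, P(a)_k := Σ_{i=1}^k a_i, D(a)_0 := 0, D(a)_k := Σ_{i=1}^k (1 − a_i). For M in C and n ∈ ℤ define T_a^n(M) := colim_{k ∈ ℕ₀} (S^{-P(a)_k}T^{n+k}(M̃_{D(a)_k}), δ_a^{n+k}), where δ_a^{n+k} is Σ^{-P(a)_k}δ^{n+k} if P(a)_{k+1} = P(a)_k and is S^{-P(a)_k}δ̲^{n+k} if P(a)_{k+1} = P(a)_k + 1. Then for every M in C and n ∈ ℤ there exists an isomorphism ω_{a,n} : T_a^n(M) → T_Res^n(M), obtained as the colimit of the composites of kernel monomorphisms ε^{-1} ∘ ⋯ ∘ ε^{-P(a)_k} : S^{-P(a)_k}T^{n+k}(M̃_{D(a)_k}) → T^{n+k}(M̃_k). -/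

import Mathlib

open CategoryTheory Category Limits

universe v u v' u'

namespace Mislin

variable (C : Type u) [Category.{v} C] [Abelian C]
variable (D : Type u') [Category.{v'} D] [Abelian D]

/-- A cohomological functor `(T^•, δ^•) : C ⥤ D` (Axioms 2.1–2.2 of the paper):
a family of additive functors together with connecting homomorphisms, natural with respect
to morphisms of short exact sequences, inducing long exact sequences. -/
structure CohomFunctor where
  T : ℤ → C ⥤ D
  additive : ∀ n, (T n).Additive
  δ : ∀ {X : ShortComplex C}, X.ShortExact → ∀ n : ℤ, (T n).obj X.X₃ ⟶ (T (n + 1)).obj X.X₁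
  δ_natural : ∀ {X Y : ShortComplex C} (hX : X.ShortExact) (hY : Y.ShortExact)
    (φ : X ⟶ Y) (n : ℤ),
    (T n).map φ.τ₃ ≫ δ hY n = δ hX n ≫ (T (n + 1)).map φ.τ₁
  zero₁ : ∀ {X : ShortComplex C}, X.ShortExact → ∀ n : ℤ,
    (T n).map X.f ≫ (T n).map X.g = 0
  zero₂ : ∀ {X : ShortComplex C} (hX : X.ShortExact) (n : ℤ),
    (T n).map X.g ≫ δ hX n = 0
  zero₃ : ∀ {X : ShortComplex C} (hX : X.ShortExact) (n : ℤ),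
    δ hX n ≫ (T (n + 1)).map X.f = 0
  exact₁ : ∀ {X : ShortComplex C} (hX : X.ShortExact) (n : ℤ),
    (ShortComplex.mk ((T n).map X.f) ((T n).map X.g) (zero₁ hX n)).Exact
  exact₂ : ∀ {X : ShortComplex C} (hX : X.ShortExact) (n : ℤ),
    (ShortComplex.mk ((T n).map X.g) (δ hX n) (zero₂ hX n)).Exact
  exact₃ : ∀ {X : ShortComplex C} (hX : X.ShortExact) (n : ℤ),
    (ShortComplex.mk (δ hX n) ((T (n + 1)).map X.f) (zero₃ hX n)).Exact

variable {C D}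

/-- A morphism of cohomological functors (Axiom 2.3). -/
structure CohomHom (T U : CohomFunctor C D) where
  app : ∀ n : ℤ, T.T n ⟶ U.T n
  comm : ∀ {X : ShortComplex C} (hX : X.ShortExact) (n : ℤ),
    (app n).app X.X₃ ≫ U.δ hX n = T.δ hX n ≫ (app (n + 1)).app X.X₁

/-- Composition of morphisms of cohomological functors. -/
def CohomHom.comp {T U V : CohomFunctor C D} (f : CohomHom T U) (g : CohomHom U V) :
    CohomHom T V where
  app n := f.app n ≫ g.app n
  comm hX n := by
    simp only [NatTrans.comp_app, Category.assoc]
    rw [g.comm hX n, ← Category.assoc, f.comm hX n, Category.assoc]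

/-- A cohomological functor vanishes on projectives if `T^n(P) = 0` for all projective `P`
and all `n ∈ ℤ`. -/
def VanishesOnProjectives (T : CohomFunctor C D) : Prop :=
  ∀ (n : ℤ) (P : C), Projective P → IsZero ((T.T n).obj P)

/-- `(T̂^•, δ̂^•)` together with `ν : T^• → T̂^•` is a Mislin completion of `(T^•, δ^•)`
(Definition 2.4): it vanishes on projectives and every morphism to a cohomological functor
vanishing on projectives factors uniquely through `ν`. -/
structure IsMislinCompletion (T That : CohomFunctor C D) (ν : CohomHom T That) : Prop where
  vanishes : VanishesOnProjectives That
  factors : ∀ (U : CohomFunctor C D), VanishesOnProjectives U → ∀ φ : CohomHom T U,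
    ∃! ψ : CohomHom That U, ν.comp ψ = φ

/-- The elementary universal property for a colimit (direct limit) of an `ℕ`-indexed
direct system in `D`. -/
structure IsDirectLimit {X : ℕ → D} (f : ∀ k, X k ⟶ X (k + 1)) (L : D)
    (ι : ∀ k, X k ⟶ L) : Prop where
  comm : ∀ k, f k ≫ ι (k + 1) = ι k
  desc : ∀ (Z : D) (g : ∀ k, X k ⟶ Z), (∀ k, f k ≫ g (k + 1) = g k) →
    ∃! u : L ⟶ Z, ∀ k, ι k ≫ u = g k

/-- An abstract system of left satellite functors `S^{-k}T^n` of a cohomological functor `T`,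
in the sense of Cartan–Eilenberg, together with the connecting homomorphisms `ε`, the
factorisation `δ̲` of `δ` through the first left satellite, and its satellites `S^{-k}δ̲`.
Here `S k n` plays the role of `S^{-k}T^n`. -/
structure SatelliteSystem (T : CohomFunctor C D) where
  S : ℕ → ℤ → C ⥤ D
  additive : ∀ k n, (S k n).Additive
  S_zero : ∀ n, S 0 n = T.T n
  /-- connecting homomorphisms of satellite functors, `ε^{-k-1} : S^{-k-1}T^n(X₃) ⟶ S^{-k}T^n(X₁)`. -/
  ε : ∀ {X : ShortComplex C}, X.ShortExact → ∀ (k : ℕ) (n : ℤ),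
    (S (k + 1) n).obj X.X₃ ⟶ (S k n).obj X.X₁
  ε_natural : ∀ {X Y : ShortComplex C} (hX : X.ShortExact) (hY : Y.ShortExact)
    (φ : X ⟶ Y) (k : ℕ) (n : ℤ),
    (S (k + 1) n).map φ.τ₃ ≫ ε hY k n = ε hX k n ≫ (S k n).map φ.τ₁
  /-- higher left satellite functors vanish on projective objects. -/
  vanish : ∀ (k : ℕ) (n : ℤ) (P : C), Projective P → IsZero ((S (k + 1) n).obj P)
  sz₁ : ∀ {X : ShortComplex C}, X.ShortExact → ∀ (k : ℕ) (n : ℤ),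
    (S k n).map X.f ≫ (S k n).map X.g = 0
  sz₂ : ∀ {X : ShortComplex C} (hX : X.ShortExact) (k : ℕ) (n : ℤ),
    (S (k + 1) n).map X.g ≫ ε hX k n = 0
  sz₃ : ∀ {X : ShortComplex C} (hX : X.ShortExact) (k : ℕ) (n : ℤ),
    ε hX k n ≫ (S k n).map X.f = 0
  sexact₁ : ∀ {X : ShortComplex C} (hX : X.ShortExact) (k : ℕ) (n : ℤ),
    (ShortComplex.mk ((S k n).map X.f) ((S k n).map X.g) (sz₁ hX k n)).Exact
  sexact₂ : ∀ {X : ShortComplex C} (hX : X.ShortExact) (k : ℕ) (n : ℤ),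
    (ShortComplex.mk ((S (k + 1) n).map X.g) (ε hX k n) (sz₂ hX k n)).Exact
  sexact₃ : ∀ {X : ShortComplex C} (hX : X.ShortExact) (k : ℕ) (n : ℤ),
    (ShortComplex.mk (ε hX k n) ((S k n).map X.f) (sz₃ hX k n)).Exact
  /-- the natural transformations `S^{-k}δ̲^n : S^{-k}T^n → S^{-k-1}T^{n+1}`. -/
  Sδbar : ∀ (k : ℕ) (n : ℤ), S k n ⟶ S (k + 1) (n + 1)
  /-- `δ^n` factors as `δ̲^n` followed by `ε^{-1}` (Diagram 3.4 of the paper). -/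
  δ_fac : ∀ {X : ShortComplex C} (hX : X.ShortExact) (n : ℤ),
    T.δ hX n =
      eqToHom (congrArg (fun F : C ⥤ D => F.obj X.X₃) (S_zero n).symm) ≫
        (Sδbar 0 n).app X.X₃ ≫ ε hX 0 (n + 1) ≫
          eqToHom (congrArg (fun F : C ⥤ D => F.obj X.X₁) (S_zero (n + 1)))
  /-- the defining compatibility of `S^{-k-1}δ̲` with `S^{-k}δ̲` over the kernel
  monomorphisms `ε`, for short exact sequences with projective middle term. -/
  Sδbar_proj : ∀ {X : ShortComplex C} (hX : X.ShortExact), Projective X.X₂ →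
    ∀ (k : ℕ) (n : ℤ),
    (Sδbar (k + 1) n).app X.X₃ ≫ ε hX (k + 1) (n + 1) =
      ε hX k n ≫ (Sδbar k n).app X.X₁

theorem cast_step (n : ℤ) (k : ℕ) : n + (k : ℤ) + 1 = n + ((k + 1 : ℕ) : ℤ) := by
  push_cast; ring

/-- The `k`-th term `S^{-k}T^{n+k}(M)` of the direct system of the satellite functor
construction. -/
def SatelliteSystem.obj {T : CohomFunctor C D} (SS : SatelliteSystem T) (n : ℤ) (M : C)
    (k : ℕ) : D :=
  (SS.S k (n + (k : ℤ))).obj M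

/-- The transition morphism `S^{-k}δ̲^{n+k} : S^{-k}T^{n+k}(M) ⟶ S^{-k-1}T^{n+k+1}(M)` of the
direct system of the satellite functor construction. -/
def SatelliteSystem.map {T : CohomFunctor C D} (SS : SatelliteSystem T) (n : ℤ) (M : C)
    (k : ℕ) : SS.obj n M k ⟶ SS.obj n M (k + 1) :=
  (SS.Sδbar k (n + (k : ℤ))).app M ≫
    eqToHom (congrArg (fun m : ℤ => (SS.S (k + 1) m).obj M) (cast_step n k))

theorem obj_zero_eq {T : CohomFunctor C D} (SS : SatelliteSystem T) (n : ℤ) (M : C) :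
    (T.T n).obj M = SS.obj n M 0 := by
  show (T.T n).obj M = (SS.S 0 (n + ((0 : ℕ) : ℤ))).obj M
  rw [SS.S_zero]
  norm_num



/-- A projective resolution of `M` presented through its syzygies: short exact sequences
`0 → M̃_{k+1} → P_k → M̃_k → 0` with `P_k` projective and `M̃_0 = M`. -/
structure SyzygySequence (M : C) where
  Mt : ℕ → C
  Mt_zero : Mt 0 = M
  P : ℕ → C
  projP : ∀ k, Projective (P k)
  ι : ∀ k, Mt (k + 1) ⟶ P k
  π : ∀ k, P k ⟶ Mt k
  w : ∀ k, ι k ≫ π k = 0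
  shortExact : ∀ k, (ShortComplex.mk (ι k) (π k) (w k)).ShortExact

/-- The `k`-th term `T^{n+k}(M̃_k)` of the direct system of the resolution construction. -/
def resObj (T : CohomFunctor C D) {M : C} (R : SyzygySequence M) (n : ℤ) (k : ℕ) : D :=
  (T.T (n + (k : ℤ))).obj (R.Mt k)

/-- The transition morphism `δ^{n+k} : T^{n+k}(M̃_k) ⟶ T^{n+k+1}(M̃_{k+1})` of the direct
system of the resolution construction. -/
def resMap (T : CohomFunctor C D) {M : C} (R : SyzygySequence M) (n : ℤ) (k : ℕ) :
    resObj T R n k ⟶ resObj T R n (k + 1) :=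
  T.δ (R.shortExact k) (n + (k : ℤ)) ≫
    eqToHom (congrArg (fun m : ℤ => (T.T m).obj (R.Mt (k + 1))) (cast_step n k))

/-- The composite of the kernel monomorphisms `ε` taking `S^{-k}T^m(M̃_j)` to
`T^m(M̃_{j+k})` (the morphisms `õ^k`, `o^k` from the proof of Lemma 4.1). -/
def oeps {T : CohomFunctor C D} (SS : SatelliteSystem T) {M : C} (R : SyzygySequence M)
    (m : ℤ) : (k j : ℕ) → ((SS.S k m).obj (R.Mt j) ⟶ (T.T m).obj (R.Mt (j + k)))
  | 0, j => eqToHom (by rw [SS.S_zero]; rfl)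
  | k + 1, j =>
      SS.ε (R.shortExact j) k m ≫ oeps SS R m k (j + 1) ≫
        eqToHom (congrArg (fun i => (T.T m).obj (R.Mt i))
          (show (j + 1) + k = j + (k + 1) by omega))

/-- The component `o^k ∘ ε^{-1}`-style morphism from the satellite system to the resolution
system, out of which `ω_n(M)` is built. -/
def omegaComp {T : CohomFunctor C D} (SS : SatelliteSystem T) {M : C}
    (R : SyzygySequence M) (n : ℤ) (k : ℕ) : SS.obj n M k ⟶ resObj T R n k :=
  eqToHom (congrArg ((SS.S k (n + (k : ℤ))).obj) R.Mt_zero.symm) ≫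
    oeps SS R (n + (k : ℤ)) k 0 ≫
      eqToHom (congrArg (fun i => (T.T (n + (k : ℤ))).obj (R.Mt i)) (Nat.zero_add k))

/-- A lift of a morphism `f : M ⟶ N` to the syzygies of chosen projective resolutions
(Definition 4.3). -/
structure SyzygyLift {M N : C} (f : M ⟶ N) (RM : SyzygySequence M)
    (RN : SyzygySequence N) where
  ft : ∀ k, RM.Mt k ⟶ RN.Mt k
  fP : ∀ k, RM.P k ⟶ RN.P k
  ft_zero : ft 0 = eqToHom RM.Mt_zero ≫ f ≫ eqToHom RN.Mt_zero.symm
  comm_ι : ∀ k, RM.ι k ≫ fP k = ft (k + 1) ≫ RN.ι k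
  comm_π : ∀ k, RM.π k ≫ ft k = fP k ≫ RN.π k

/-- Horseshoe-Lemma-compatible projective resolutions of the terms of a short exact sequence
`0 → A → B → C → 0`, with short exact sequences of syzygies `0 → Ã_k → B̃_k → C̃_k → 0`
(Diagram 4.9). -/
structure HorseshoeData {X : ShortComplex C} (hX : X.ShortExact) where
  RA : SyzygySequence X.X₁
  RB : SyzygySequence X.X₂
  RC : SyzygySequence X.X₃
  f : ∀ k, RA.Mt k ⟶ RB.Mt k
  g : ∀ k, RB.Mt k ⟶ RC.Mt k
  w : ∀ k, f k ≫ g k = 0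
  shortExact : ∀ k, (ShortComplex.mk (f k) (g k) (w k)).ShortExact
  f_zero : f 0 = eqToHom RA.Mt_zero ≫ X.f ≫ eqToHom RB.Mt_zero.symm
  g_zero : g 0 = eqToHom RB.Mt_zero ≫ X.g ≫ eqToHom RC.Mt_zero.symm
  fP : ∀ k, RA.P k ⟶ RB.P k
  gP : ∀ k, RB.P k ⟶ RC.P k
  wP : ∀ k, fP k ≫ gP k = 0
  shortExactP : ∀ k, (ShortComplex.mk (fP k) (gP k) (wP k)).ShortExact
  comm_fι : ∀ k, RA.ι k ≫ fP k = f (k + 1) ≫ RB.ι k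
  comm_fπ : ∀ k, RA.π k ≫ f k = fP k ≫ RB.π k
  comm_gι : ∀ k, RB.ι k ≫ gP k = g (k + 1) ≫ RC.ι k
  comm_gπ : ∀ k, RB.π k ≫ g k = gP k ≫ RC.π k



/-- `P(a)_k = Σ_{i=1}^k a_i` (number of `1`s among the first `k` entries of `a`). -/
def Pa (a : ℕ → Bool) : ℕ → ℕ
  | 0 => 0
  | k + 1 => Pa a k + (a k).toNat

/-- `D(a)_k = Σ_{i=1}^k (1 - a_i)` (number of `0`s among the first `k` entries of `a`). -/
def Da (a : ℕ → Bool) : ℕ → ℕ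
  | 0 => 0
  | k + 1 => Da a k + (!(a k)).toNat

theorem Da_add_Pa (a : ℕ → Bool) (k : ℕ) : Da a k + Pa a k = k := by
  induction k with
  | zero => rfl
  | succ k ih => cases h : a k <;> simp [Pa, Da, h] <;> omega

/-- The morphisms `Σ^{-l}δ^m : S^{-l}T^m(M̃_j) ⟶ S^{-l}T^{m+1}(M̃_{j+1})`
(Equation 4.4 of the paper; `Σ^0 δ = δ`). -/
def sigmaDelta {T : CohomFunctor C D} (SS : SatelliteSystem T) {M : C}
    (R : SyzygySequence M) :
    (l j : ℕ) → (m : ℤ) → ((SS.S l m).obj (R.Mt j) ⟶ (SS.S l (m + 1)).obj (R.Mt (j + 1)))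
  | 0, j, m =>
      eqToHom (congrArg (fun F : C ⥤ D => F.obj (R.Mt j)) (SS.S_zero m)) ≫
        T.δ (R.shortExact j) m ≫
          eqToHom (congrArg (fun F : C ⥤ D => F.obj (R.Mt (j + 1))) (SS.S_zero (m + 1)).symm)
  | l + 1, j, m => SS.ε (R.shortExact j) l m ≫ (SS.Sδbar l m).app (R.Mt (j + 1))

/-- The `k`-th term `S^{-P(a)_k}T^{n+k}(M̃_{D(a)_k})` of the direct system of the
construction `T_a`. -/
def aObj {T : CohomFunctor C D} (SS : SatelliteSystem T) {M : C} (R : SyzygySequence M)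
    (a : ℕ → Bool) (n : ℤ) (k : ℕ) : D :=
  (SS.S (Pa a k) (n + (k : ℤ))).obj (R.Mt (Da a k))

/-- The transition morphism `δ_a^{n+k}` of the direct system of the construction `T_a`:
`S^{-P(a)_k}δ̲^{n+k}` if `a_{k+1} = 1` and `Σ^{-P(a)_k}δ^{n+k}` if `a_{k+1} = 0`. -/
def aMap {T : CohomFunctor C D} (SS : SatelliteSystem T) {M : C} (R : SyzygySequence M)
    (a : ℕ → Bool) (n : ℤ) (k : ℕ) : aObj SS R a n k ⟶ aObj SS R a n (k + 1) :=
  if h : a k = true then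
    (SS.Sδbar (Pa a k) (n + (k : ℤ))).app (R.Mt (Da a k)) ≫
      eqToHom (by
        have h1 : Pa a (k + 1) = Pa a k + 1 := by simp [Pa, h]
        have h2 : Da a (k + 1) = Da a k := by simp [Da, h]
        show (SS.S (Pa a k + 1) (n + (k : ℤ) + 1)).obj (R.Mt (Da a k)) =
          (SS.S (Pa a (k + 1)) (n + ((k + 1 : ℕ) : ℤ))).obj (R.Mt (Da a (k + 1)))
        rw [h1, h2, ← cast_step n k])
  else
    sigmaDelta SS R (Pa a k) (Da a k) (n + (k : ℤ)) ≫
      eqToHom (by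
        have hb : a k = false := by simpa using h
        have h1 : Pa a (k + 1) = Pa a k := by simp [Pa, hb]
        have h2 : Da a (k + 1) = Da a k + 1 := by simp [Da, hb]
        show (SS.S (Pa a k) (n + (k : ℤ) + 1)).obj (R.Mt (Da a k + 1)) =
          (SS.S (Pa a (k + 1)) (n + ((k + 1 : ℕ) : ℤ))).obj (R.Mt (Da a (k + 1)))
        rw [h1, h2, ← cast_step n k])

/-- The composite `ô_a^k` of kernel monomorphisms `ε` from the `k`-th term of the system of
`T_a` to the `k`-th term of the system of `T_Res` (proof of Lemma 4.11). -/
def ohat {T : CohomFunctor C D} (SS : SatelliteSystem T) {M : C} (R : SyzygySequence M)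
    (a : ℕ → Bool) (n : ℤ) (k : ℕ) : aObj SS R a n k ⟶ resObj T R n k :=
  oeps SS R (n + (k : ℤ)) (Pa a k) (Da a k) ≫
    eqToHom (congrArg (fun i => (T.T (n + (k : ℤ))).obj (R.Mt i)) (Da_add_Pa a k))


section Aux

variable {T : CohomFunctor C D} (SS : SatelliteSystem T) {M : C} (R : SyzygySequence M)

lemma eps_mono {X : ShortComplex C} (hX : X.ShortExact) (hP : Projective X.X₂)
    (k : ℕ) (n : ℤ) : Mono (SS.ε hX k n) := by
  have h0 : (SS.S (k + 1) n).map X.g = 0 := (SS.vanish k n X.X₂ hP).eq_of_src _ _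
  exact (SS.sexact₂ hX k n).mono_g h0

lemma eps_isIso {X : ShortComplex C} (hX : X.ShortExact) (hP : Projective X.X₂)
    (k : ℕ) (n : ℤ) : IsIso (SS.ε hX (k + 1) n) := by
  have h0 : (SS.S (k + 1) n).map X.f = 0 := (SS.vanish k n X.X₂ hP).eq_of_tgt _ _
  haveI := (SS.sexact₃ hX (k + 1) n).epi_f h0
  haveI := eps_mono SS hX hP (k + 1) n
  exact isIso_of_mono_of_epi _

lemma oeps_mono (m : ℤ) : ∀ (p j : ℕ), Mono (oeps SS R m p j)
  | 0, j => by rw [oeps]; infer_instance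
  | p + 1, j => by
      rw [oeps]
      haveI := eps_mono SS (R.shortExact j) (R.projP j) p m
      haveI := oeps_mono m p (j + 1)
      infer_instance

lemma oeps_congr {m m' : ℤ} {p p' j j' : ℕ} (hm : m = m') (hp : p = p') (hj : j = j') :
    oeps SS R m p j =
      eqToHom (by rw [hm, hp, hj]) ≫ oeps SS R m' p' j' ≫ eqToHom (by rw [hm, hp, hj]) := by
  subst hm; subst hp; subst hj; simp

lemma delta_congr {i i' : ℕ} (h : i = i') (m : ℤ) :
    T.δ (R.shortExact i) m =
      eqToHom (show (T.T m).obj (R.Mt i) = (T.T m).obj (R.Mt i') by rw [h]) ≫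
        T.δ (R.shortExact i') m ≫
          eqToHom (show (T.T (m + 1)).obj (R.Mt (i' + 1)) = (T.T (m + 1)).obj (R.Mt (i + 1))
            by rw [h]) := by
  subst h; simp

lemma key : ∀ (p j : ℕ) (m : ℤ),
    (SS.Sδbar p m).app (R.Mt j) ≫ oeps SS R (m + 1) (p + 1) j
      = oeps SS R m p j ≫ T.δ (R.shortExact (j + p)) m
  | 0, j, m => by
      rw [SS.δ_fac (R.shortExact j) m]
      simp [oeps]
  | p + 1, j, m => by
      rw [oeps]
      rw [← Category.assoc, SS.Sδbar_proj (R.shortExact j) (R.projP j) p m]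
      rw [Category.assoc, ← Category.assoc ((SS.Sδbar p m).app _),
        key p (j + 1) m]
      rw [delta_congr R (show (j + 1) + p = (j + p) + 1 by omega) m]
      simp [oeps]

lemma sqF (p j : ℕ) (m : ℤ) :
    sigmaDelta SS R p j m ≫ oeps SS R (m + 1) p (j + 1)
      = oeps SS R m p j ≫ T.δ (R.shortExact (j + p)) m ≫
          eqToHom (show (T.T (m + 1)).obj (R.Mt (j + p + 1)) =
            (T.T (m + 1)).obj (R.Mt ((j + 1) + p)) by rw [show (j+1)+p = j+p+1 by omega]) := by
  match p with
  | 0 => simp [sigmaDelta, oeps]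
  | l + 1 =>
      rw [sigmaDelta, Category.assoc, key SS R l (j + 1) m]
      rw [delta_congr R (show (j + 1) + l = (j + l) + 1 by omega) m]
      simp [oeps]

lemma delta_factor : ∀ (p j : ℕ) (m : ℤ),
    ∃ γ : (T.T m).obj (R.Mt (j + p)) ⟶ (SS.S (p + 1) (m + 1)).obj (R.Mt j),
      γ ≫ oeps SS R (m + 1) (p + 1) j = T.δ (R.shortExact (j + p)) m
  | 0, j, m => by
      refine ⟨eqToHom (by rw [Nat.add_zero, SS.S_zero]) ≫ (SS.Sδbar 0 m).app (R.Mt j), ?_⟩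
      rw [Category.assoc, key SS R 0 j m]
      simp [oeps]
  | p + 1, j, m => by
      obtain ⟨γ', hγ'⟩ := delta_factor p (j + 1) m
      haveI := eps_isIso SS (R.shortExact j) (R.projP j) p (m + 1)
      refine ⟨eqToHom (show (T.T m).obj (R.Mt (j + (p + 1))) =
          (T.T m).obj (R.Mt ((j + 1) + p)) by rw [show j + (p + 1) = j + 1 + p by omega]) ≫
        γ' ≫ inv (SS.ε (R.shortExact j) (p + 1) (m + 1)), ?_⟩
      rw [oeps]
      simp only [Category.assoc, IsIso.inv_hom_id_assoc]
      slice_lhs 2 3 => rw [hγ']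
      rw [delta_congr R (show (j + 1) + p = (j + p) + 1 by omega) m]
      simp

lemma ohat_mono (a : ℕ → Bool) (n : ℤ) (k : ℕ) : Mono (ohat SS R a n k) := by
  rw [ohat]
  haveI := oeps_mono SS R (n + (k : ℤ)) (Pa a k) (Da a k)
  unfold aObj resObj
  infer_instance

lemma square (a : ℕ → Bool) (n : ℤ) (k : ℕ) :
    aMap SS R a n k ≫ ohat SS R a n (k + 1) = ohat SS R a n k ≫ resMap T R n k := by
  by_cases h : a k = true
  · have hP : Pa a (k + 1) = Pa a k + 1 := by simp [Pa, h]
    have hD : Da a (k + 1) = Da a k := by simp [Da, h]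
    rw [aMap, dif_pos h, ohat, ohat, resMap,
      oeps_congr SS R (cast_step n k).symm hP hD]
    unfold aObj resObj
    simp only [Category.assoc]
    slice_lhs 2 3 => erw [eqToHom_trans, eqToHom_refl]
    simp only [Category.id_comp, Category.assoc]
    rw [← Category.assoc, key SS R (Pa a k) (Da a k) (n + (k : ℤ)),
      delta_congr R (Da_add_Pa a k) (n + (k : ℤ))]
    simp only [Category.assoc]
    slice_lhs 4 5 => rw [eqToHom_trans]
    slice_lhs 4 5 => rw [eqToHom_trans]
  · have hb : a k = false := by simpa using h
    have hP : Pa a (k + 1) = Pa a k := by simp [Pa, hb]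
    have hD : Da a (k + 1) = Da a k + 1 := by simp [Da, hb]
    rw [aMap, dif_neg h, ohat, ohat, resMap,
      oeps_congr SS R (cast_step n k).symm hP hD]
    unfold aObj resObj
    simp only [Category.assoc]
    slice_lhs 2 3 => erw [eqToHom_trans, eqToHom_refl]
    simp only [Category.id_comp, Category.assoc]
    rw [← Category.assoc, sqF SS R (Pa a k) (Da a k) (n + (k : ℤ)),
      delta_congr R (Da_add_Pa a k) (n + (k : ℤ))]
    simp only [Category.assoc]
    slice_lhs 4 5 => rw [eqToHom_trans]
    slice_lhs 4 5 => rw [eqToHom_trans]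
    slice_lhs 4 5 => rw [eqToHom_trans]

lemma beta_exists (a : ℕ → Bool) (n : ℤ) (k : ℕ) :
    ∃ β : resObj T R n k ⟶ aObj SS R a n (k + 1),
      β ≫ ohat SS R a n (k + 1) = resMap T R n k := by
  rcases hq : Pa a (k + 1) with _ | q
  · have hiso : IsIso (ohat SS R a n (k + 1)) := by
      rw [ohat, oeps_congr SS R rfl hq rfl, oeps]
      unfold aObj resObj
      infer_instance
    exact ⟨resMap T R n k ≫ inv (ohat SS R a n (k + 1)), by simp⟩
  · have hD : Da a (k + 1) + q = k := by
      have := Da_add_Pa a (k + 1); omega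
    obtain ⟨γ, hγ⟩ := delta_factor SS R q (Da a (k + 1)) (n + (k : ℤ))
    refine ⟨eqToHom (by unfold resObj; rw [hD]) ≫ γ ≫
      eqToHom (by unfold aObj; rw [hq, ← cast_step n k]), ?_⟩
    rw [ohat, oeps_congr SS R (cast_step n k).symm hq rfl]
    unfold aObj resObj
    simp only [Category.assoc]
    slice_lhs 3 4 => rw [eqToHom_trans, eqToHom_refl]
    simp only [Category.id_comp, Category.assoc]
    slice_lhs 2 3 => rw [hγ]
    rw [delta_congr R hD (n + (k : ℤ)), resMap]
    simp only [Category.assoc]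
    slice_lhs 1 2 => rw [eqToHom_trans, eqToHom_refl]
    simp only [Category.id_comp, Category.assoc]
    slice_lhs 2 3 => rw [eqToHom_trans]
    slice_lhs 2 3 => rw [eqToHom_trans]
    rfl

end Aux

/-- Definition 4.8 / Lemma 4.9. For `a ∈ {0,1}^ℕ`, with
`P(a)_k = Σ_{i≤k} a_i` and `D(a)_k = Σ_{i≤k} (1 − a_i)`, and
`T_a^n(M) := colim_{k ∈ ℕ₀} (S^{-P(a)_k}T^{n+k}(M̃_{D(a)_k}), δ_a^{n+k})` — with
`δ_a^{n+k} = Σ^{-P(a)_k}δ^{n+k}` if `P(a)_{k+1} = P(a)_k` and `= S^{-P(a)_k}δ̲^{n+k}` if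
`P(a)_{k+1} = P(a)_k + 1` — there exists an isomorphism `ω_{a,n} : T_a^n(M) ⟶ T_Res^n(M)`,
obtained as the colimit of the composites of kernel monomorphisms
`ε^{-1} ∘ ⋯ ∘ ε^{-P(a)_k} : S^{-P(a)_k}T^{n+k}(M̃_{D(a)_k}) ⟶ T^{n+k}(M̃_k)`. -/
theorem a_construction_iso_resolution
    {C : Type u} [Category.{v} C] [Abelian C] [EnoughProjectives C]
    {D : Type u'} [Category.{v'} D] [Abelian D]
    [HasColimitsOfShape ℕ D] [PreservesFiniteLimits (colim : (ℕ ⥤ D) ⥤ D)]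
    (T : CohomFunctor C D) (SS : SatelliteSystem T) (a : ℕ → Bool)
    {M : C} (R : SyzygySequence M) (n : ℤ)
    (La : D) (ιa : ∀ k, aObj SS R a n k ⟶ La) (hLa : IsDirectLimit (aMap SS R a n) La ιa)
    (LRes : D) (ιres : ∀ k, resObj T R n k ⟶ LRes)
    (hLRes : IsDirectLimit (resMap T R n) LRes ιres) :
    ∃ w : La ⟶ LRes, IsIso w ∧ ∀ k, ιa k ≫ w = ohat SS R a n k ≫ ιres k := by
  have hsq := square SS R a n
  choose β hβ using fun k => beta_exists SS R a n k
  have hβ2 : ∀ k, ohat SS R a n k ≫ β k = aMap SS R a n k := by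
    intro k
    haveI := ohat_mono SS R a n (k + 1)
    apply (cancel_mono (ohat SS R a n (k + 1))).1
    rw [Category.assoc, hβ k, hsq k]
  obtain ⟨w, hw, -⟩ := hLa.desc LRes (fun k => ohat SS R a n k ≫ ιres k)
    (fun k => by rw [← Category.assoc, hsq k, Category.assoc, hLRes.comm k])
  obtain ⟨v, hv, -⟩ := hLRes.desc La (fun k => β k ≫ ιa (k + 1))
    (fun k => by
      rw [← Category.assoc, ← hβ k]
      slice_lhs 2 3 => rw [hβ2 (k + 1)]
      rw [hLa.comm (k + 1)])
  obtain ⟨ua, hua, huniqa⟩ := hLa.desc La ιa hLa.comm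
  obtain ⟨ur, hur, huniqr⟩ := hLRes.desc LRes ιres hLRes.comm
  have hwv : w ≫ v = 𝟙 La := by
    have h1 : ∀ k, ιa k ≫ (w ≫ v) = ιa k := by
      intro k
      rw [← Category.assoc, hw k, Category.assoc, hv k, ← Category.assoc, hβ2 k,
        hLa.comm k]
    exact (huniqa _ h1).trans (huniqa (𝟙 La) (fun k => Category.comp_id _)).symm
  have hvw : v ≫ w = 𝟙 LRes := by
    have h1 : ∀ k, ιres k ≫ (v ≫ w) = ιres k := by
      intro k
      rw [← Category.assoc, hv k, Category.assoc, hw (k + 1), ← Category.assoc, hβ k,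
        hLRes.comm k]
    exact (huniqr _ h1).trans (huniqr (𝟙 LRes) (fun k => Category.comp_id _)).symm
  exact ⟨w, ⟨v, hwv, hvw⟩, hw⟩

end Mislin
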